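/- The special hyperbolic orbit h is the only Reeb orbit contained in the connected-sum sphere S₊: if γ : ℝ → ℝ⁴ is differentiable with γ′(t) = R(γ(t)) for all t, and if f(γ(t)) = 1 and the w-coordinate γ₄(t) = 0 for all t, then γ₃(t) = 0 and γ₁(t)² + γ₂(t)² = 4 for all t; that is, the image of γ is contained in h. -/

import Mathlib

/-!
Along a Reeb trajectory `w' = 2κz` with `κ > 0`, so staying in `{w = 0}` forces `z ≡ 0`;
the level set `f = 1` then reads `x²/4 + y²/4 = 1`.
-/

noncomputable section

/-- The function `f(x,y,z,w) = x²/4 + y²/4 + z² - w²/2` from the Weinstein one-handle model. -/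
def fW (p : Fin 4 → ℝ) : ℝ :=
  (1 / 4) * p 0 ^ 2 + (1 / 4) * p 1 ^ 2 + p 2 ^ 2 - (1 / 2) * p 3 ^ 2

/-- The function `κ(p) = 1/(1 + 3z² + (3/2)w²)`. -/
def κW (p : Fin 4 → ℝ) : ℝ :=
  1 / (1 + 3 * p 2 ^ 2 + (3 / 2) * p 3 ^ 2)

/-- The Reeb vector field `R(p) = κ(p)·(-(1/2)y, (1/2)x, w, 2z)`. -/
def RW (p : Fin 4 → ℝ) : Fin 4 → ℝ :=
  κW p • ![-(1 / 2) * p 1, (1 / 2) * p 0, p 3, 2 * p 2]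

theorem deriv_apply_eq_zero_of_apply_const {𝕜 ι F : Type*} [NontriviallyNormedField 𝕜]
    [Fintype ι] [NormedAddCommGroup F] [NormedSpace 𝕜 F] {γ : 𝕜 → ι → F} {t : 𝕜}
    (hγ : DifferentiableAt 𝕜 γ t) {i : ι} {c : F} (hc : ∀ s, γ s i = c) :
    deriv γ t i = 0 := by
  have hi : HasDerivAt (fun s => γ s i) (deriv γ t i) t := hasDerivAt_pi.mp hγ.hasDerivAt i
  simp only [hc] at hi
  exact hi.unique (hasDerivAt_const t c)

theorem κW_pos (p : Fin 4 → ℝ) : 0 < κW p := by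
  unfold κW
  positivity

theorem RW_apply_three (p : Fin 4 → ℝ) : RW p 3 = κW p * (2 * p 2) := rfl

theorem eq_zero_of_RW_apply_three_eq_zero {p : Fin 4 → ℝ} (h : RW p 3 = 0) : p 2 = 0 := by
  rw [RW_apply_three] at h
  simpa using (mul_eq_zero.mp h).resolve_left (κW_pos p).ne'

theorem sq_add_sq_eq_four_of_fW_eq_one {p : Fin 4 → ℝ} (hf : fW p = 1) (hz : p 2 = 0)
    (hw : p 3 = 0) : p 0 ^ 2 + p 1 ^ 2 = 4 := by
  unfold fW at hf
  rw [hz, hw] at hf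
  linarith

/-- The special hyperbolic orbit `h` is the only Reeb orbit contained in the connected-sum
sphere `S₊`: any Reeb trajectory staying in `S₊ = {f = 1, w = 0}` has `z ≡ 0` and
`x² + y² ≡ 4`, i.e. lies in `h`. -/
theorem only_reeb_orbit_in_sphere (γ : ℝ → Fin 4 → ℝ)
    (hdiff : Differentiable ℝ γ)
    (hode : ∀ t : ℝ, deriv γ t = RW (γ t))
    (hf : ∀ t : ℝ, fW (γ t) = 1)
    (hw : ∀ t : ℝ, γ t 3 = 0) :
    ∀ t : ℝ, γ t 2 = 0 ∧ γ t 0 ^ 2 + γ t 1 ^ 2 = 4 := by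
  intro t
  have hz : γ t 2 = 0 := by
    apply eq_zero_of_RW_apply_three_eq_zero
    rw [← hode t]
    exact deriv_apply_eq_zero_of_apply_const (hdiff t) hw
  exact ⟨hz, sq_add_sq_eq_four_of_fW_eq_one (hf t) hz (hw t)⟩
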